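/- For ordered rooted binary trees S and T with n internal nodes, if they have no common edge pair (e = 0), then d_R(S,T) ≥ n - 1. -/

import Mathlib

inductive BT : Type
  | leaf : BT
  | node : BT → BT → BT
deriving DecidableEq

namespace BT

/-- number of internal nodes -/
def size : BT → ℕ
  | leaf => 0
  | node l r => size l + size r + 1

/-- number of leaves -/
def nl (t : BT) : ℕ := size t + 1

/-- one (right) rotation somewhere in the tree -/
inductive Rot : BT → BT → Prop
  | root (a b c : BT) : Rot (node (node a b) c) (node a (node b c))
  | congrL {l l' : BT} (r : BT) : Rot l l' → Rot (node l r) (node l' r)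
  | congrR (l : BT) {r r' : BT} : Rot r r' → Rot (node l r) (node l r')

/-- a rotation move: a right rotation or its inverse (a left rotation) -/
def Move (s t : BT) : Prop := Rot s t ∨ Rot t s

/-- `Chain n s t`: `s` is transformed into `t` by `n` rotation moves -/
inductive Chain : ℕ → BT → BT → Prop
  | refl (t : BT) : Chain 0 t t
  | step {n : ℕ} {s u t : BT} : Move s u → Chain n u t → Chain (n + 1) s t

/-- rotation distance -/
noncomputable def dR (s t : BT) : ℕ := sInf {n | Chain n s t}

def isNode : BT → Bool
  | leaf => false
  | node _ _ => true

/-- the multiset of leaf partitions induced by internal edges, where the leaves of the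
tree are numbered from `k` on, left to right; each internal edge is recorded by the
set of leaf numbers below it. -/
def iparts : BT → ℕ → Multiset (Finset ℕ)
  | leaf, _ => 0
  | node l r, k =>
      ((if isNode l then {Finset.Ico k (k + nl l)} else 0) + iparts l k)
        + ((if isNode r then {Finset.Ico (k + nl l) (k + nl l + nl r)} else 0)
            + iparts r (k + nl l))

/-- number of common edge pairs -/
def commonEdges (s t : BT) : ℕ := ((iparts s 0) ∩ (iparts t 0)).card

/-!
A rotation destroys one internal edge and creates one: the multiset of leaf partitions loses one
element and gains one. So along a chain of `m` moves from `S` to `T`, at most `m` partitions of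
`T` can be missing from `S`. Without common edge pairs all `n - 1` partitions of `T` are missing
from `S`. A shortest chain exists (so `dR S T` is not the junk value `sInf ∅ = 0`) because every
tree rotates to the right comb.
-/

end BT

theorem Multiset.card_inter_le_of_add_singleton_eq {α : Type*} [DecidableEq α]
    {A B : Multiset α} {x y : α} (h : A + {y} = B + {x}) (C : Multiset α) :
    (B ∩ C).card ≤ (A ∩ C).card + 1 := by
  have hB : B ∩ C ≤ A ∩ C + {y} := by
    rw [Multiset.le_iff_count]
    intro a
    have := congrArg (Multiset.count a) h
    simp only [Multiset.count_inter, Multiset.count_add] at this ⊢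
    omega
  simpa using Multiset.card_le_card hB

namespace BT

lemma Rot.size_eq {s t : BT} (h : Rot s t) : size s = size t := by
  induction h <;> simp only [size] <;> omega

lemma Rot.nl_eq {s t : BT} (h : Rot s t) : nl s = nl t := by
  simp only [nl, h.size_eq]

lemma Rot.isNode_eq {s t : BT} (h : Rot s t) : isNode s = isNode t := by
  cases h <;> rfl

lemma Rot.exists_iparts_add_eq {s t : BT} (h : Rot s t) (k : ℕ) :
    ∃ x y, iparts s k + {y} = iparts t k + {x} := by
  induction h generalizing k with
  | root a b c =>
    have hab : nl (node a b) = nl a + nl b := by simp only [nl, size]; omega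
    have hbc : nl (node b c) = nl b + nl c := by simp only [nl, size]; omega
    refine ⟨Finset.Ico k (k + nl a + nl b), Finset.Ico (k + nl a) (k + nl a + nl b + nl c), ?_⟩
    simp only [iparts, isNode, if_true, hab, hbc, ← add_assoc]
    ac_rfl
  | congrL r h ih =>
    obtain ⟨x, y, hxy⟩ := ih k
    refine ⟨x, y, ?_⟩
    ext a
    have := congrArg (Multiset.count a) hxy
    simp only [iparts, h.isNode_eq, h.nl_eq, Multiset.count_add] at this ⊢
    omega
  | congrR l h ih =>
    obtain ⟨x, y, hxy⟩ := ih (k + nl l)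
    refine ⟨x, y, ?_⟩
    ext a
    have := congrArg (Multiset.count a) hxy
    simp only [iparts, h.isNode_eq, h.nl_eq, Multiset.count_add] at this ⊢
    omega

lemma Move.exists_iparts_add_eq {s t : BT} (h : Move s t) (k : ℕ) :
    ∃ x y, iparts s k + {y} = iparts t k + {x} := by
  rcases h with h | h
  · exact h.exists_iparts_add_eq k
  · obtain ⟨x, y, hxy⟩ := h.exists_iparts_add_eq k
    exact ⟨y, x, hxy.symm⟩

lemma Chain.card_inter_iparts_le {m : ℕ} {s t : BT} (h : Chain m s t) (k : ℕ)
    (C : Multiset (Finset ℕ)) : (iparts t k ∩ C).card ≤ (iparts s k ∩ C).card + m := by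
  induction h with
  | refl => simp
  | step hmove _ ih =>
    obtain ⟨x, y, hxy⟩ := hmove.exists_iparts_add_eq k
    have := Multiset.card_inter_le_of_add_singleton_eq hxy C
    omega

lemma size_sub_one_add_ite_isNode (t : BT) : t.size - 1 + (if isNode t then 1 else 0) = t.size := by
  cases t <;> simp [size, isNode]

lemma card_iparts (t : BT) (k : ℕ) : (iparts t k).card = t.size - 1 := by
  induction t generalizing k with
  | leaf => rfl
  | node l r ihl ihr =>
    have hl := size_sub_one_add_ite_isNode l
    have hr := size_sub_one_add_ite_isNode r
    simp only [iparts, Multiset.card_add, ihl, ihr, apply_ite Multiset.card,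
      Multiset.card_singleton, Multiset.card_zero, size]
    omega

lemma Chain.trans {m m' : ℕ} {s u t : BT} (h : Chain m s u) (h' : Chain m' u t) :
    Chain (m + m') s t := by
  induction h with
  | refl => simpa using h'
  | step hmove _ ih => simpa [Nat.add_right_comm] using Chain.step hmove (ih h')

lemma Chain.symm {m : ℕ} {s t : BT} (h : Chain m s t) : Chain m t s := by
  induction h with
  | refl => exact Chain.refl _
  | step hmove _ ih => exact ih.trans (Chain.step (Or.symm hmove) (Chain.refl _))

lemma Chain.congrR {m : ℕ} (l : BT) {r r' : BT} (h : Chain m r r') :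
    Chain m (node l r) (node l r') := by
  induction h with
  | refl => exact Chain.refl _
  | step hmove _ ih => exact Chain.step (hmove.imp (Rot.congrR l) (Rot.congrR l)) ih

def comb : ℕ → BT
  | 0 => leaf
  | n + 1 => node leaf (comb n)

lemma exists_chain_node_comb (l : BT) : ∀ r : BT,
    (∀ t : BT, t.size < (node l r).size → ∃ m, Chain m t (comb t.size)) →
    ∃ m, Chain m (node l r) (comb (node l r).size) := by
  induction l with
  | leaf =>
    intro r ih
    obtain ⟨m, h⟩ := ih r (by simp only [size]; omega)
    exact ⟨m, by simpa [size, comb] using h.congrR leaf⟩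
  | node a b iha _ =>
    intro r ih
    have hsize : (node a (node b r)).size = (node (node a b) r).size :=
      (Rot.root a b r).size_eq.symm
    obtain ⟨m, h⟩ := iha (node b r) (hsize ▸ ih)
    exact ⟨m + 1, Chain.step (Or.inl (Rot.root a b r)) (hsize ▸ h)⟩

lemma exists_chain_comb (t : BT) : ∃ m, Chain m t (comb t.size) := by
  induction h : t.size using Nat.strong_induction_on generalizing t with
  | _ n ih =>
    subst h
    cases t with
    | leaf => exact ⟨0, Chain.refl _⟩
    | node l r => exact exists_chain_node_comb l r fun t ht => ih _ ht t rfl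

lemma exists_chain_of_size_eq {s t : BT} (h : s.size = t.size) : ∃ m, Chain m s t := by
  obtain ⟨m, hs⟩ := exists_chain_comb s
  obtain ⟨m', ht⟩ := exists_chain_comb t
  exact ⟨m + m', hs.trans (h ▸ ht.symm)⟩

theorem dR_lower_bound_no_common_edges (n : ℕ) (S T : BT)
    (hS : S.size = n) (hT : T.size = n) (he : iparts S 0 ∩ iparts T 0 = 0) :
    n - 1 ≤ dR S T := by
  have hchain : Chain (dR S T) S T := Nat.sInf_mem (exists_chain_of_size_eq (hS.trans hT.symm))
  have hcount := hchain.card_inter_iparts_le 0 (iparts T 0)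
  rwa [← Multiset.inf_eq_inter, inf_idem, he, card_iparts, hT, Multiset.card_zero, zero_add]
    at hcount

end BT
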